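/- arXiv:2004.02476 — 2 statements merged into one kernel-verified Lean document; each statement's English description precedes it below -/
import Mathlib

section
/- With the greedy index set J defined from θ ∈ [0,1] and a residual r = b − Ax with Aᵀr ≠ 0, any index j* attaining the maximum of |A_(j)ᵀ r|² / ‖A_(j)‖₂² over 1 ≤ j ≤ n satisfies |A_(j*)ᵀ r|² ≥ ε · ‖Aᵀr‖₂² · ‖A_(j*)‖₂², i.e. j* ∈ J; in particular J is nonempty. -/
noncomputable section
open Matrix

/-- Squared Euclidean norm `‖v‖₂²` of a vector. -/
def norm2 {ι : Type*} [Fintype ι] (v : ι → ℝ) : ℝ := ∑ i, (v i) ^ 2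

/-- Squared Frobenius norm `‖A‖_F²` of a matrix. -/
def frob2 {ι κ : Type*} [Fintype ι] [Fintype κ] (A : Matrix ι κ ℝ) : ℝ :=
  ∑ i, ∑ j, (A i j) ^ 2

/-- Squared largest singular value `σ_max(B)²`, i.e. the largest eigenvalue of `Bᵀ * B`. -/
def sigmaMaxSq {ι κ : Type*} [Fintype ι] [Fintype κ] [DecidableEq κ]
    (B : Matrix ι κ ℝ) : ℝ :=
  sSup (Set.range (show (Bᵀ * B).IsHermitian by
    simpa using Matrix.isHermitian_conjTranspose_mul_self B).eigenvalues)

/-- Squared smallest singular value `σ_min(B)²`, i.e. the smallest eigenvalue of `Bᵀ * B`. -/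
def sigmaMinSq {ι κ : Type*} [Fintype ι] [Fintype κ] [DecidableEq κ]
    (B : Matrix ι κ ℝ) : ℝ :=
  sInf (Set.range (show (Bᵀ * B).IsHermitian by
    simpa using Matrix.isHermitian_conjTranspose_mul_self B).eigenvalues)

/-- Squared Euclidean norm `‖A_(j)‖₂²` of the `j`-th column of `A`. -/
def col2 {m n : ℕ} (A : Matrix (Fin m) (Fin n) ℝ) (j : Fin n) : ℝ := ∑ i, (A i j) ^ 2

/-- `A` has full column rank: its columns are linearly independent. -/
def FullColRank {m n : ℕ} (A : Matrix (Fin m) (Fin n) ℝ) : Prop :=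
  LinearIndependent ℝ fun j : Fin n => (fun i => A i j : Fin m → ℝ)

/-- `max_{1 ≤ j ≤ n} |A_(j)ᵀ r|² / ‖A_(j)‖₂²`. -/
def maxRatio {m n : ℕ} (A : Matrix (Fin m) (Fin n) ℝ) (r : Fin m → ℝ) : ℝ :=
  ⨆ j : Fin n, ((Aᵀ *ᵥ r) j) ^ 2 / col2 A j

/-- The greedy parameter
`ε = (θ/‖Aᵀr‖₂²)·max_j |A_(j)ᵀ r|²/‖A_(j)‖₂² + (1−θ)/‖A‖_F²`. -/
def eps {m n : ℕ} (A : Matrix (Fin m) (Fin n) ℝ) (r : Fin m → ℝ) (θ : ℝ) : ℝ :=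
  θ / norm2 (Aᵀ *ᵥ r) * maxRatio A r + (1 - θ) / frob2 A

open Classical in
/-- The greedy index set `J = { j : |A_(j)ᵀ r|² ≥ ε ‖Aᵀr‖₂² ‖A_(j)‖₂² }`. -/
def greedySet {m n : ℕ} (A : Matrix (Fin m) (Fin n) ℝ) (r : Fin m → ℝ) (θ : ℝ) :
    Finset (Fin n) :=
  Finset.univ.filter fun j =>
    eps A r θ * norm2 (Aᵀ *ᵥ r) * col2 A j ≤ ((Aᵀ *ᵥ r) j) ^ 2

/-- The column submatrix `A_J` of `A`, with columns indexed by `J`. -/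
def subCols {m n : ℕ} (A : Matrix (Fin m) (Fin n) ℝ) (J : Finset (Fin n)) :
    Matrix (Fin m) {j // j ∈ J} ℝ :=
  A.submatrix id fun j => (j : Fin n)

/-- The submatrix `I_J` of the `n × n` identity with columns indexed by `J`. -/
def subId {n : ℕ} (J : Finset (Fin n)) : Matrix (Fin n) {j // j ∈ J} ℝ :=
  (1 : Matrix (Fin n) (Fin n) ℝ).submatrix id fun j => (j : Fin n)

/-- Moore–Penrose pseudoinverse of a full-column-rank matrix: `B† = (BᵀB)⁻¹Bᵀ`. -/
def pinv {ι κ : Type*} [Fintype ι] [Fintype κ] [DecidableEq κ] (B : Matrix ι κ ℝ) :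
    Matrix κ ι ℝ :=
  (Bᵀ * B)⁻¹ * Bᵀ

/-- The matrix `Ã_J` whose columns are the normalized columns `A_(j)/‖A_(j)‖₂`, `j ∈ J`. -/
def tildeA {m n : ℕ} (A : Matrix (Fin m) (Fin n) ℝ) (J : Finset (Fin n)) :
    Matrix (Fin m) {j // j ∈ J} ℝ :=
  Matrix.of fun i j => A i (j : Fin n) / Real.sqrt (col2 A (j : Fin n))

/-- The matrix `Ĩ_J` whose columns are `e_j/‖A_(j)‖₂`, `j ∈ J`. -/
def tildeI {m n : ℕ} (A : Matrix (Fin m) (Fin n) ℝ) (J : Finset (Fin n)) :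
    Matrix (Fin n) {j // j ∈ J} ℝ :=
  Matrix.of fun i j => (if i = (j : Fin n) then 1 else 0) / Real.sqrt (col2 A (j : Fin n))

theorem norm2_nonneg {ι : Type*} [Fintype ι] (v : ι → ℝ) : 0 ≤ norm2 v :=
  Finset.sum_nonneg fun i _ => sq_nonneg (v i)

section GreedyIndex

variable {m n : ℕ} (A : Matrix (Fin m) (Fin n) ℝ) (r : Fin m → ℝ)

theorem col2_nonneg (j : Fin n) : 0 ≤ col2 A j :=
  Finset.sum_nonneg fun i _ => sq_nonneg (A i j)

theorem frob2_eq_sum_col2 : frob2 A = ∑ j, col2 A j := by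
  unfold frob2 col2
  exact Finset.sum_comm

theorem mulVec_transpose_apply_eq_zero_of_col2_eq_zero {j : Fin n} (hj : col2 A j = 0) :
    (Aᵀ *ᵥ r) j = 0 := by
  have hcol : ∀ i, A i j = 0 := fun i =>
    pow_eq_zero_iff two_ne_zero |>.mp <|
      (Finset.sum_eq_zero_iff_of_nonneg fun i _ => sq_nonneg (A i j)).mp hj i (Finset.mem_univ i)
  simp [mulVec, dotProduct, hcol]

/-- Holds also for a zero column, where `x / 0 = 0` and `A_(j)ᵀ r = 0`. -/
theorem sq_div_col2_mul_col2 (j : Fin n) :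
    (Aᵀ *ᵥ r) j ^ 2 / col2 A j * col2 A j = (Aᵀ *ᵥ r) j ^ 2 := by
  by_cases hj : col2 A j = 0
  · simp [hj, mulVec_transpose_apply_eq_zero_of_col2_eq_zero A r hj]
  · exact div_mul_cancel₀ _ hj

theorem le_maxRatio (j : Fin n) : (Aᵀ *ᵥ r) j ^ 2 / col2 A j ≤ maxRatio A r :=
  le_ciSup (f := fun j => (Aᵀ *ᵥ r) j ^ 2 / col2 A j) (Finite.bddAbove_range _) j

theorem sq_mulVec_transpose_apply_le (j : Fin n) :
    (Aᵀ *ᵥ r) j ^ 2 ≤ maxRatio A r * col2 A j := by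
  rw [← sq_div_col2_mul_col2 A r j]
  exact mul_le_mul_of_nonneg_right (le_maxRatio A r j) (col2_nonneg A j)

theorem norm2_mulVec_transpose_le : norm2 (Aᵀ *ᵥ r) ≤ maxRatio A r * frob2 A := by
  rw [frob2_eq_sum_col2, Finset.mul_sum]
  exact Finset.sum_le_sum fun j _ => sq_mulVec_transpose_apply_le A r j

/-- `ε ‖Aᵀr‖₂²` is a convex combination of `max_j |A_(j)ᵀ r|²/‖A_(j)‖₂²` and
`‖Aᵀr‖₂²/‖A‖_F²`, and the latter is at most the former. -/
theorem eps_mul_norm2_mul_col2_le {θ : ℝ} (hθ : θ ≤ 1) {j : Fin n}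
    (hmax : (Aᵀ *ᵥ r) j ^ 2 / col2 A j = maxRatio A r) :
    eps A r θ * norm2 (Aᵀ *ᵥ r) * col2 A j ≤ (Aᵀ *ᵥ r) j ^ 2 := by
  have hMc : maxRatio A r * col2 A j = (Aᵀ *ᵥ r) j ^ 2 := by
    rw [← hmax, sq_div_col2_mul_col2]
  rcases (norm2_nonneg (Aᵀ *ᵥ r)).eq_or_lt with hN | hN
  · rw [← hN, mul_zero, zero_mul]
    positivity
  have hNMF := norm2_mulVec_transpose_le A r
  have hc := col2_nonneg A j
  have hM : 0 ≤ maxRatio A r := (div_nonneg (sq_nonneg _) hc).trans (le_maxRatio A r j)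
  have hF : 0 < frob2 A := pos_of_mul_pos_right (hN.trans_le hNMF) hM
  calc eps A r θ * norm2 (Aᵀ *ᵥ r) * col2 A j
        = θ * (maxRatio A r * col2 A j) + (1 - θ) * (norm2 (Aᵀ *ᵥ r) / frob2 A) * col2 A j := by
        rw [eps]
        field_simp
    _ ≤ θ * (maxRatio A r * col2 A j) + (1 - θ) * maxRatio A r * col2 A j := by
        gcongr
        exact (div_le_iff₀ hF).mpr hNMF
    _ = (Aᵀ *ᵥ r) j ^ 2 := by
        rw [← hMc]
        ring

theorem mem_greedySet_iff {θ : ℝ} {j : Fin n} :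
    j ∈ greedySet A r θ ↔ eps A r θ * norm2 (Aᵀ *ᵥ r) * col2 A j ≤ (Aᵀ *ᵥ r) j ^ 2 := by
  simp [greedySet]

end GreedyIndex

theorem stmt2_general {m n : ℕ} (A : Matrix (Fin m) (Fin n) ℝ)
    (θ : ℝ) (hθ : θ ∈ Set.Icc (0 : ℝ) 1)
    (r : Fin m → ℝ)
    (jstar : Fin n)
    (hmax : ((Aᵀ *ᵥ r) jstar) ^ 2 / col2 A jstar = maxRatio A r) :
    eps A r θ * norm2 (Aᵀ *ᵥ r) * col2 A jstar ≤ ((Aᵀ *ᵥ r) jstar) ^ 2 ∧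
      jstar ∈ greedySet A r θ ∧ (greedySet A r θ).Nonempty := by
  have hle := eps_mul_norm2_mul_col2_le A r hθ.2 hmax
  have hmem := (mem_greedySet_iff A r).mpr hle
  exact ⟨hle, hmem, jstar, hmem⟩

/-- an index attaining `max_j |A_(j)ᵀ r|²/‖A_(j)‖₂²` belongs to the
greedy index set `J`; in particular `J` is nonempty. -/
theorem stmt2 {m n : ℕ} (A : Matrix (Fin m) (Fin n) ℝ) (hA : FullColRank A)
    (b : Fin m → ℝ) (θ : ℝ) (hθ : θ ∈ Set.Icc (0 : ℝ) 1) (x : Fin n → ℝ)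
    (r : Fin m → ℝ) (hr : r = b - A *ᵥ x) (hr0 : Aᵀ *ᵥ r ≠ 0)
    (jstar : Fin n)
    (hmax : ((Aᵀ *ᵥ r) jstar) ^ 2 / col2 A jstar = maxRatio A r) :
    eps A r θ * norm2 (Aᵀ *ᵥ r) * col2 A jstar ≤ ((Aᵀ *ᵥ r) jstar) ^ 2 ∧
      jstar ∈ greedySet A r θ ∧ (greedySet A r θ).Nonempty :=
  stmt2_general A θ hθ r jstar hmax
end
end

section
/- Let J ⊆ {1,…,n} be a nonempty index set and let x ∈ R^n. If x' = x + I_J A_J†(b − Ax), then ‖x' − x⋆‖²_{AᵀA} ≤ ‖x − x⋆‖²_{AᵀA} − (1/σ_max(A_J)²) · ‖A_Jᵀ A(x − x⋆)‖₂², where σ_max(A_J) is the largest singular value of A_J. -/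
noncomputable section
open Matrix

/-! With `e = x - x⋆`, `B = A_J` and `v = Bᵀ A e`, the normal equation turns the block update into
`A e ↦ A e - B B† A e`, the removal of the orthogonal projection of `A e` onto the range of `B`,
so the squared energy error drops by exactly `vᵀ (BᵀB)⁻¹ v`. Every eigenvalue of `BᵀB` is at most
`σ_max(B)²`, so the functional calculus gives `σ_max(B)⁻² • 1 ≤ (BᵀB)⁻¹` in the Loewner order. -/

open scoped MatrixOrder

lemma norm2_eq_dotProduct {ι : Type*} [Fintype ι] (v : ι → ℝ) : norm2 v = v ⬝ᵥ v := by
  simp only [norm2, dotProduct, sq]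

section

variable {ι κ : Type*} [Fintype ι] [Fintype κ]

lemma posDef_transpose_mul_self {B : Matrix ι κ ℝ} (hB : Function.Injective B.mulVec) :
    (Bᵀ * B).PosDef := by
  simpa using PosDef.conjTranspose_mul_self B hB

variable [DecidableEq κ]

lemma Matrix.PosDef.algebraMap_inv_le_inv {M : Matrix κ κ ℝ} (hM : M.PosDef) {t : ℝ}
    (ht : ∀ i, hM.isHermitian.eigenvalues i ≤ t) : algebraMap ℝ _ t⁻¹ ≤ M⁻¹ := by
  have hspec := hM.isHermitian.spectrum_real_eq_range_eigenvalues
  have hinv : cfc (fun x : ℝ => x⁻¹) M = M⁻¹ := by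
    rw [nonsing_inv_eq_ringInverse]
    exact cfc_ringInverse_id (R := ℝ) (a := M) hM.isUnit hM.isHermitian
  rw [← hinv]
  refine algebraMap_le_cfc _ _ _ ?_ ?_ hM.isHermitian
  · rw [hspec]
    rintro _ ⟨i, rfl⟩
    exact inv_anti₀ (hM.eigenvalues_pos i) (ht i)
  · refine continuousOn_inv₀.mono ?_
    rw [hspec]
    rintro _ ⟨i, rfl⟩
    exact (hM.eigenvalues_pos i).ne'

lemma Matrix.PosDef.inv_mul_dotProduct_le {M : Matrix κ κ ℝ} (hM : M.PosDef) {t : ℝ}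
    (ht : ∀ i, hM.isHermitian.eigenvalues i ≤ t) (v : κ → ℝ) :
    t⁻¹ * (v ⬝ᵥ v) ≤ v ⬝ᵥ (M⁻¹ *ᵥ v) := by
  have h := (Matrix.le_iff.mp (hM.algebraMap_inv_le_inv ht)).dotProduct_mulVec_nonneg v
  rw [Algebra.algebraMap_eq_smul_one, sub_mulVec, smul_mulVec, one_mulVec, dotProduct_sub,
    dotProduct_smul, star_trivial, smul_eq_mul] at h
  linarith

lemma eigenvalues_le_sigmaMaxSq (B : Matrix ι κ ℝ) (hH : (Bᵀ * B).IsHermitian) (i : κ) :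
    hH.eigenvalues i ≤ sigmaMaxSq B :=
  le_csSup (Set.finite_range _).bddAbove ⟨i, rfl⟩

lemma sigmaMaxSq_inv_mul_dotProduct_le {B : Matrix ι κ ℝ} (hB : Function.Injective B.mulVec)
    (v : κ → ℝ) : (sigmaMaxSq B)⁻¹ * (v ⬝ᵥ v) ≤ v ⬝ᵥ ((Bᵀ * B)⁻¹ *ᵥ v) :=
  (posDef_transpose_mul_self hB).inv_mul_dotProduct_le (eigenvalues_le_sigmaMaxSq B _) v

/-- Pythagoras for the orthogonal projection `B B†` onto the range of `B`. -/
lemma norm2_sub_mulVec_pinv (B : Matrix ι κ ℝ) (hB : IsUnit (Bᵀ * B)) (y : ι → ℝ) :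
    norm2 (y - B *ᵥ (pinv B *ᵥ y)) =
      norm2 y - (Bᵀ *ᵥ y) ⬝ᵥ ((Bᵀ * B)⁻¹ *ᵥ (Bᵀ *ᵥ y)) := by
  rw [pinv, ← mulVec_mulVec]
  set w := (Bᵀ * B)⁻¹ *ᵥ (Bᵀ *ᵥ y)
  have hnormal : Bᵀ *ᵥ (B *ᵥ w) = Bᵀ *ᵥ y := by
    rw [mulVec_mulVec, mulVec_mulVec, mul_nonsing_inv _ ((isUnit_iff_isUnit_det _).mp hB),
      one_mulVec]
  have hcross : y ⬝ᵥ (B *ᵥ w) = (Bᵀ *ᵥ y) ⬝ᵥ w := by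
    rw [dotProduct_mulVec, mulVec_transpose]
  have hsq : (B *ᵥ w) ⬝ᵥ (B *ᵥ w) = (Bᵀ *ᵥ y) ⬝ᵥ w := by
    rw [dotProduct_mulVec, ← mulVec_transpose, hnormal]
  rw [norm2_eq_dotProduct, norm2_eq_dotProduct, sub_dotProduct, dotProduct_sub,
    dotProduct_sub, hcross, hsq, dotProduct_comm (B *ᵥ w), hcross]
  ring

end

section

variable {m n : ℕ}

lemma mul_subId (A : Matrix (Fin m) (Fin n) ℝ) (J : Finset (Fin n)) :
    A * subId J = subCols A J :=
  mul_submatrix_one (Equiv.refl _) _ A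

lemma FullColRank.injective_mulVec_subCols {A : Matrix (Fin m) (Fin n) ℝ} (hA : FullColRank A)
    (J : Finset (Fin n)) : Function.Injective (subCols A J).mulVec := by
  rw [mulVec_injective_iff]
  exact hA.comp _ Subtype.val_injective

/-- The residual `b - A x⋆` drops out because it is orthogonal to all columns of `A`. -/
lemma mulVec_sub_of_blockUpdate (A : Matrix (Fin m) (Fin n) ℝ) {b : Fin m → ℝ}
    {xstar : Fin n → ℝ} (hstar : (Aᵀ * A) *ᵥ xstar = Aᵀ *ᵥ b) (J : Finset (Fin n))
    {x x' : Fin n → ℝ} (hx' : x' = x + subId J *ᵥ (pinv (subCols A J) *ᵥ (b - A *ᵥ x))) :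
    A *ᵥ (x' - xstar) =
      A *ᵥ (x - xstar) - subCols A J *ᵥ (pinv (subCols A J) *ᵥ (A *ᵥ (x - xstar))) := by
  have horth : (subCols A J)ᵀ *ᵥ (b - A *ᵥ xstar) = 0 := by
    rw [← mul_subId, transpose_mul, ← mulVec_mulVec, mulVec_sub, mulVec_mulVec, hstar, sub_self,
      mulVec_zero]
  have hres : b - A *ᵥ x = (b - A *ᵥ xstar) - A *ᵥ (x - xstar) := by
    rw [mulVec_sub]; abel
  have hpinv : pinv (subCols A J) *ᵥ (b - A *ᵥ xstar) = 0 := by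
    rw [pinv, ← mulVec_mulVec, horth, mulVec_zero]
  rw [hx', hres, mulVec_sub (pinv _), hpinv, zero_sub, mulVec_neg,
    show ∀ u, x + -u - xstar = (x - xstar) - u from fun u => by abel,
    mulVec_sub, mulVec_mulVec, mul_subId]

end

theorem stmt4_general {m n : ℕ} (A : Matrix (Fin m) (Fin n) ℝ) (hA : FullColRank A)
    (b : Fin m → ℝ) (xstar : Fin n → ℝ) (hstar : (Aᵀ * A) *ᵥ xstar = Aᵀ *ᵥ b)
    (J : Finset (Fin n)) (x x' : Fin n → ℝ)
    (hx' : x' = x + subId J *ᵥ (pinv (subCols A J) *ᵥ (b - A *ᵥ x))) :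
    norm2 (A *ᵥ (x' - xstar)) ≤
      norm2 (A *ᵥ (x - xstar)) -
        1 / sigmaMaxSq (subCols A J) *
          norm2 ((subCols A J)ᵀ *ᵥ (A *ᵥ (x - xstar))) := by
  have hB := hA.injective_mulVec_subCols J
  rw [mulVec_sub_of_blockUpdate A hstar J hx',
    norm2_sub_mulVec_pinv _ (posDef_transpose_mul_self hB).isUnit,
    norm2_eq_dotProduct ((subCols A J)ᵀ *ᵥ _), one_div]
  linarith [sigmaMaxSq_inv_mul_dotProduct_le hB ((subCols A J)ᵀ *ᵥ (A *ᵥ (x - xstar)))]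

/-- one-step bound for a block Gauss–Seidel update:
`‖x' − x⋆‖²_{AᵀA} ≤ ‖x − x⋆‖²_{AᵀA} − (1/σ_max(A_J)²)‖A_Jᵀ A(x − x⋆)‖₂²`. -/
theorem stmt4 {m n : ℕ} (A : Matrix (Fin m) (Fin n) ℝ) (hA : FullColRank A)
    (b : Fin m → ℝ) (xstar : Fin n → ℝ) (hstar : (Aᵀ * A) *ᵥ xstar = Aᵀ *ᵥ b)
    (J : Finset (Fin n)) (hJ : J.Nonempty) (x x' : Fin n → ℝ)
    (hx' : x' = x + subId J *ᵥ (pinv (subCols A J) *ᵥ (b - A *ᵥ x))) :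
    norm2 (A *ᵥ (x' - xstar)) ≤
      norm2 (A *ᵥ (x - xstar)) -
        1 / sigmaMaxSq (subCols A J) *
          norm2 ((subCols A J)ᵀ *ᵥ (A *ᵥ (x - xstar))) :=
  stmt4_general A hA b xstar hstar J x x' hx'
end
end
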